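/- Let (S, μ) be a σ-finite measure space, W a symmetric integrable function on S², and f : S → [0,1] measurable with ∫ f dμ ≤ M, such that the cut norm ‖W − (f⊗f)·W‖_□ < ε. Define U := {x : f(x) > 1/2}. Then μ(U) ≤ 2M and ‖W − W·1_{U×U}‖_□ < 4ε. -/

import Mathlib

open MeasureTheory Filter Topology

noncomputable def cutNorm {S : Type*} [MeasurableSpace S] (μ : Measure S)
    (F : S × S → ℝ) : ℝ :=
  ⨆ TU : {TU : Set S × Set S // MeasurableSet TU.1 ∧ MeasurableSet TU.2},
    |∫ p in TU.1.1 ×ˢ TU.1.2, F p ∂(μ.prod μ)|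

/-! On `P × Q` with `f ≤ c < 1` on `P`, expand
`W = ∑_{k<N} (f ⊗ f)^k (W - (f ⊗ f) W) + (f ⊗ f)^N W`. The `k`-th term is the kernel
`W - (f ⊗ f) W`, of cut norm `ε`, weighted by functions bounded by `c^k` and `1`; by the
layer-cake bound `|∫ g(x) h(y) F| ≤ ‖g‖_∞ ‖h‖_∞ ‖F‖_□` its integral is at most `c^k ε`, and the
tail vanishes as `N → ∞`, so `|∫_{P×Q} W| ≤ ε / (1 - c)`. With `c = 1/2` and `U = {f > 1/2}`,
a rectangle `T × V` minus `U × U` splits into `(T \ U) × V` and `(T ∩ U) × (V \ U)`, which the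
symmetry of `W` turns into `(V \ U) × (T ∩ U)`: two rectangles with first side in `{f ≤ 1/2}`,
hence `4ε`. The bound on `μ U` is Markov's inequality. -/

open Set

lemma measureReal_restrict_Ioo_zero_one_Iio {a : ℝ} (ha : a ∈ Icc (0 : ℝ) 1) :
    (volume.restrict (Ioo (0 : ℝ) 1)).real (Iio a) = a := by
  rw [measureReal_restrict_apply measurableSet_Iio, Iio_inter_Ioo, min_eq_left ha.2,
    measureReal_def, Real.volume_Ioo, sub_zero, ENNReal.toReal_ofReal ha.1]

lemma eq_geom_sum_mul_sub_add (x w : ℝ) (N : ℕ) :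
    w = ∑ k ∈ Finset.range N, x ^ k * (w - x * w) + x ^ N * w := by
  rw [← Finset.sum_mul]
  linear_combination w * geom_sum_mul x N

lemma sum_range_pow_mul_le_div_one_sub {c ε : ℝ} (hc0 : 0 ≤ c) (hc1 : c < 1) (hε : 0 ≤ ε)
    (N : ℕ) : ∑ k ∈ Finset.range N, c ^ k * ε ≤ ε / (1 - c) := by
  rw [← Finset.sum_mul, Finset.range_eq_Ico, div_eq_mul_inv, mul_comm ε]
  refine mul_le_mul_of_nonneg_right ?_ hε
  simpa using geom_sum_Ico_le_of_lt_one (m := 0) (n := N) hc0 hc1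

lemma indicator_pow_mem_Icc {S : Type*} {f : S → ℝ} {P : Set S} {a : ℝ} (ha : 0 ≤ a)
    (hf : ∀ x ∈ P, f x ∈ Icc 0 a) (k : ℕ) (x : S) :
    P.indicator (f ^ k) x ∈ Icc 0 (a ^ k) := by
  by_cases hx : x ∈ P
  · rw [indicator_of_mem hx, Pi.pow_apply]
    exact ⟨pow_nonneg (hf x hx).1 k, pow_le_pow_left₀ (hf x hx).1 (hf x hx).2 k⟩
  · rw [indicator_of_notMem hx]
    exact ⟨le_rfl, pow_nonneg ha k⟩

lemma indicator_prod_eq_sum_add {S : Type*} (W : S × S → ℝ) (f : S → ℝ) (P Q : Set S) (N : ℕ)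
    (p : S × S) :
    (P ×ˢ Q).indicator W p
      = ∑ k ∈ Finset.range N,
          P.indicator (f ^ k) p.1 * Q.indicator (f ^ k) p.2 * (W p - f p.1 * f p.2 * W p)
        + P.indicator (f ^ N) p.1 * Q.indicator (f ^ N) p.2 * W p := by
  by_cases h1 : p.1 ∈ P <;> by_cases h2 : p.2 ∈ Q
  · simp only [indicator_of_mem (mk_mem_prod h1 h2), indicator_of_mem h1, indicator_of_mem h2,
      Pi.pow_apply, ← mul_pow]
    exact eq_geom_sum_mul_sub_add _ _ _
  all_goals simp [h1, h2]

section CutNorm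

variable {S : Type*} [MeasurableSpace S] {μ : Measure S}

lemma measure_ge_le_ofReal_integral_div {f : S → ℝ} (hf_nonneg : 0 ≤ᵐ[μ] f)
    (hf : Integrable f μ) {t : ℝ} (ht : 0 < t) :
    μ {x | t ≤ f x} ≤ ENNReal.ofReal ((∫ x, f x ∂μ) / t) := by
  rw [← ENNReal.ofReal_toReal (hf.measure_ge_lt_top ht).ne]
  exact ENNReal.ofReal_le_ofReal
    ((le_div_iff₀' ht).2 (mul_meas_ge_le_integral_of_nonneg hf_nonneg hf t))

lemma cutNorm_nonneg (F : S × S → ℝ) : 0 ≤ cutNorm μ F :=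
  Real.iSup_nonneg fun _ => abs_nonneg _

lemma cutNorm_le {F : S × S → ℝ} {C : ℝ} (hC : 0 ≤ C)
    (h : ∀ T U : Set S, MeasurableSet T → MeasurableSet U →
      |∫ p in T ×ˢ U, F p ∂(μ.prod μ)| ≤ C) :
    cutNorm μ F ≤ C :=
  Real.iSup_le (fun TU => h _ _ TU.2.1 TU.2.2) hC

lemma abs_setIntegral_le_cutNorm {F : S × S → ℝ} (hF : Integrable F (μ.prod μ))
    {T U : Set S} (hT : MeasurableSet T) (hU : MeasurableSet U) :
    |∫ p in T ×ˢ U, F p ∂(μ.prod μ)| ≤ cutNorm μ F := by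
  have hbdd : BddAbove (range fun TU : {TU : Set S × Set S // MeasurableSet TU.1 ∧
      MeasurableSet TU.2} => |∫ p in TU.1.1 ×ˢ TU.1.2, F p ∂(μ.prod μ)|) := by
    refine ⟨∫ p, |F p| ∂(μ.prod μ), ?_⟩
    rintro _ ⟨TU, rfl⟩
    exact abs_integral_le_integral_abs.trans
      (setIntegral_le_integral hF.abs (.of_forall fun _ => abs_nonneg _))
  exact le_ciSup hbdd ⟨(T, U), hT, hU⟩

lemma integrable_mul_mul_of_abs_le {F : S × S → ℝ} (hF : Integrable F (μ.prod μ))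
    {g h : S → ℝ} (hg : Measurable g) (hh : Measurable h) {a b : ℝ}
    (hga : ∀ x, |g x| ≤ a) (hhb : ∀ x, |h x| ≤ b) :
    Integrable (fun p => g p.1 * h p.2 * F p) (μ.prod μ) :=
  hF.bdd_mul (c := a * b) (by fun_prop) <| .of_forall fun p => by
    rw [Real.norm_eq_abs, abs_mul]
    exact mul_le_mul (hga _) (hhb _) (abs_nonneg _) ((abs_nonneg _).trans (hga p.1))

lemma abs_integral_mul_mul_le_mul_integral_abs {F : S × S → ℝ} (hF : Integrable F (μ.prod μ))
    {g h : S → ℝ} (hg : Measurable g) (hh : Measurable h) {a b : ℝ}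
    (hga : ∀ x, |g x| ≤ a) (hhb : ∀ x, |h x| ≤ b) :
    |∫ p, g p.1 * h p.2 * F p ∂(μ.prod μ)| ≤ a * b * ∫ p, |F p| ∂(μ.prod μ) :=
  calc |∫ p, g p.1 * h p.2 * F p ∂(μ.prod μ)|
      ≤ ∫ p, |g p.1 * h p.2 * F p| ∂(μ.prod μ) := abs_integral_le_integral_abs
    _ ≤ ∫ p, a * b * |F p| ∂(μ.prod μ) := by
        refine integral_mono (integrable_mul_mul_of_abs_le hF hg hh hga hhb).abs
          (hF.abs.const_mul _) fun p => ?_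
        rw [abs_mul, abs_mul]
        exact mul_le_mul_of_nonneg_right
          (mul_le_mul (hga _) (hhb _) (abs_nonneg _) ((abs_nonneg _).trans (hga p.1)))
          (abs_nonneg _)
    _ = a * b * ∫ p, |F p| ∂(μ.prod μ) := integral_const_mul _ _

variable [SFinite μ]

/-- Layer cake: `g x = ∫₀¹ 1[s < g x] ds`, so the integral is an average over `s, t ∈ (0, 1)`
of integrals of `F` over the rectangles `{s < g} × {t < h}`. -/
lemma abs_integral_mul_mul_le_cutNorm {F : S × S → ℝ} (hF : Integrable F (μ.prod μ))
    {g h : S → ℝ} (hg : Measurable g) (hh : Measurable h)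
    (hg01 : ∀ x, g x ∈ Icc (0 : ℝ) 1) (hh01 : ∀ x, h x ∈ Icc (0 : ℝ) 1) :
    |∫ p, g p.1 * h p.2 * F p ∂(μ.prod μ)| ≤ cutNorm μ F := by
  let ν : Measure ℝ := volume.restrict (Ioo 0 1)
  have : IsProbabilityMeasure ν := ⟨by simp [ν]⟩
  let E : Set ((S × S) × (ℝ × ℝ)) := {q | q.2.1 < g q.1.1 ∧ q.2.2 < h q.1.2}
  have hE : MeasurableSet E :=
    (measurableSet_lt (by fun_prop) (hg.comp (by fun_prop))).inter
      (measurableSet_lt (by fun_prop) (hh.comp (by fun_prop)))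
  let Φ : S × S → ℝ × ℝ → ℝ := fun p st => E.indicator (fun q => F q.1) (p, st)
  have hΦ : Integrable (Function.uncurry Φ) ((μ.prod μ).prod (ν.prod ν)) :=
    (hF.comp_fst _).indicator hE
  have h_inner : ∀ p, ∫ st, Φ p st ∂(ν.prod ν) = g p.1 * h p.2 * F p := by
    intro p
    have : Φ p = (Iio (g p.1) ×ˢ Iio (h p.2)).indicator fun _ => F p := by
      ext st; simp [Φ, E, indicator_apply]
    rw [this, integral_indicator_const _ (measurableSet_Iio.prod measurableSet_Iio),
      measureReal_def, Measure.prod_prod, ENNReal.toReal_mul, ← measureReal_def,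
      ← measureReal_def, measureReal_restrict_Ioo_zero_one_Iio (hg01 _),
      measureReal_restrict_Ioo_zero_one_Iio (hh01 _), smul_eq_mul]
  have h_outer : ∀ st : ℝ × ℝ, ‖∫ p, Φ p st ∂(μ.prod μ)‖ ≤ cutNorm μ F := by
    intro st
    have hT : MeasurableSet {x | st.1 < g x} := measurableSet_lt measurable_const hg
    have hU : MeasurableSet {y | st.2 < h y} := measurableSet_lt measurable_const hh
    have : (fun p => Φ p st) = ({x | st.1 < g x} ×ˢ {y | st.2 < h y}).indicator F := by
      ext p; simp [Φ, E, indicator_apply]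
    rw [this, integral_indicator (hT.prod hU), Real.norm_eq_abs]
    exact abs_setIntegral_le_cutNorm hF hT hU
  calc |∫ p, g p.1 * h p.2 * F p ∂(μ.prod μ)|
      = ‖∫ st, ∫ p, Φ p st ∂(μ.prod μ) ∂(ν.prod ν)‖ := by
        simp_rw [← h_inner]; rw [integral_integral_swap hΦ, Real.norm_eq_abs]
    _ ≤ cutNorm μ F := by
        simpa using norm_integral_le_of_norm_le_const (μ := ν.prod ν) (.of_forall h_outer)

lemma abs_integral_mul_mul_le_mul_cutNorm {F : S × S → ℝ} (hF : Integrable F (μ.prod μ))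
    {g h : S → ℝ} (hg : Measurable g) (hh : Measurable h) {a b : ℝ} (ha : 0 ≤ a) (hb : 0 ≤ b)
    (hga : ∀ x, g x ∈ Icc 0 a) (hhb : ∀ x, h x ∈ Icc 0 b) :
    |∫ p, g p.1 * h p.2 * F p ∂(μ.prod μ)| ≤ a * b * cutNorm μ F := by
  obtain rfl | ha := ha.eq_or_lt
  · have : ∀ x, g x = 0 := fun x => le_antisymm (hga x).2 (hga x).1
    simp [this]
  obtain rfl | hb := hb.eq_or_lt
  · have : ∀ x, h x = 0 := fun x => le_antisymm (hhb x).2 (hhb x).1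
    simp [this]
  have hscaled := abs_integral_mul_mul_le_cutNorm hF (hg.div_const a) (hh.div_const b)
    (fun x => ⟨div_nonneg (hga x).1 ha.le, div_le_one_of_le₀ (hga x).2 ha.le⟩)
    (fun x => ⟨div_nonneg (hhb x).1 hb.le, div_le_one_of_le₀ (hhb x).2 hb.le⟩)
  have : ∫ p, g p.1 * h p.2 * F p ∂(μ.prod μ)
      = a * b * ∫ p, g p.1 / a * (h p.2 / b) * F p ∂(μ.prod μ) := by
    rw [← integral_const_mul]
    congr 1 with p
    field_simp
  rw [this, abs_mul, abs_of_pos (mul_pos ha hb)]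
  exact mul_le_mul_of_nonneg_left hscaled (mul_pos ha hb).le

lemma abs_setIntegral_prod_le_cutNorm_div {W : S × S → ℝ} (hW : Integrable W (μ.prod μ))
    {f : S → ℝ} (hf : Measurable f) (hf01 : ∀ x, f x ∈ Icc (0 : ℝ) 1)
    {c : ℝ} (hc0 : 0 ≤ c) (hc1 : c < 1) {P Q : Set S} (hP : MeasurableSet P)
    (hQ : MeasurableSet Q) (hPc : ∀ x ∈ P, f x ≤ c) :
    |∫ p in P ×ˢ Q, W p ∂(μ.prod μ)|
      ≤ cutNorm μ (fun q => W q - f q.1 * f q.2 * W q) / (1 - c) := by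
  set G := fun q : S × S => W q - f q.1 * f q.2 * W q
  set ε := cutNorm μ G
  set C := ∫ p, |W p| ∂(μ.prod μ)
  set w := fun k : ℕ => P.indicator (f ^ k)
  set v := fun k : ℕ => Q.indicator (f ^ k)
  have hw (k : ℕ) (x : S) : w k x ∈ Icc 0 (c ^ k) :=
    indicator_pow_mem_Icc hc0 (fun x hx => ⟨(hf01 x).1, hPc x hx⟩) k x
  have hv (k : ℕ) (x : S) : v k x ∈ Icc 0 1 := by
    simpa using indicator_pow_mem_Icc zero_le_one (fun x _ => hf01 x) k x
  have hwm (k : ℕ) : Measurable (w k) := (hf.pow_const k).indicator hP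
  have hvm (k : ℕ) : Measurable (v k) := (hf.pow_const k).indicator hQ
  have hw_abs (k : ℕ) (x : S) : |w k x| ≤ c ^ k := (abs_of_nonneg (hw k x).1).trans_le (hw k x).2
  have hv_abs (k : ℕ) (x : S) : |v k x| ≤ 1 := (abs_of_nonneg (hv k x).1).trans_le (hv k x).2
  have hf_abs (x : S) : |f x| ≤ 1 := (abs_of_nonneg (hf01 x).1).trans_le (hf01 x).2
  have hint (k : ℕ) {F : S × S → ℝ} (hF : Integrable F (μ.prod μ)) :
      Integrable (fun p => w k p.1 * v k p.2 * F p) (μ.prod μ) :=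
    integrable_mul_mul_of_abs_le hF (hwm k) (hvm k) (hw_abs k) (hv_abs k)
  have hG : Integrable G (μ.prod μ) :=
    hW.sub (integrable_mul_mul_of_abs_le hW hf hf hf_abs hf_abs)
  have h_term (k : ℕ) : |∫ p, w k p.1 * v k p.2 * G p ∂(μ.prod μ)| ≤ c ^ k * ε := by
    simpa using abs_integral_mul_mul_le_mul_cutNorm hG (hwm k) (hvm k) (pow_nonneg hc0 k)
      zero_le_one (hw k) (hv k)
  have h_rem (N : ℕ) : |∫ p, w N p.1 * v N p.2 * W p ∂(μ.prod μ)| ≤ c ^ N * C := by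
    simpa using abs_integral_mul_mul_le_mul_integral_abs hW (hwm N) (hvm N) (hw_abs N) (hv_abs N)
  have h_le (N : ℕ) : |∫ p in P ×ˢ Q, W p ∂(μ.prod μ)| ≤ ε / (1 - c) + c ^ N * C := by
    rw [← integral_indicator (hP.prod hQ), funext (indicator_prod_eq_sum_add W f P Q N),
      integral_add (integrable_finsetSum _ fun k _ => hint k hG) (hint N hW),
      integral_finsetSum _ fun k _ => hint k hG]
    calc _ ≤ ∑ k ∈ Finset.range N, |∫ p, w k p.1 * v k p.2 * G p ∂(μ.prod μ)|
          + |∫ p, w N p.1 * v N p.2 * W p ∂(μ.prod μ)| :=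
          (abs_add_le _ _).trans (add_le_add_left (Finset.abs_sum_le_sum_abs _ _) _)
      _ ≤ ∑ k ∈ Finset.range N, c ^ k * ε + c ^ N * C := by
          gcongr with k
          exacts [h_term k, h_rem N]
      _ ≤ ε / (1 - c) + c ^ N * C := by
          gcongr; exact sum_range_pow_mul_le_div_one_sub hc0 hc1 (cutNorm_nonneg G) N
  exact ge_of_tendsto' (by simpa using
    ((tendsto_pow_atTop_nhds_zero_of_lt_one hc0 hc1).mul_const C).const_add (ε / (1 - c))) h_le

lemma setIntegral_prod_comm_of_symm {W : S × S → ℝ} (hsymm : ∀ x y, W (x, y) = W (y, x))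
    (A B : Set S) :
    ∫ p in A ×ˢ B, W p ∂(μ.prod μ) = ∫ p in B ×ˢ A, W p ∂(μ.prod μ) := by
  rw [← setIntegral_prod_swap]
  simp only [Prod.swap, ← hsymm]

lemma cutNorm_sub_indicator_prod_le {W : S × S → ℝ} (hW : Integrable W (μ.prod μ))
    (hsymm : ∀ x y, W (x, y) = W (y, x)) {f : S → ℝ} (hf : Measurable f)
    (hf01 : ∀ x, f x ∈ Icc (0 : ℝ) 1) {c : ℝ} (hc0 : 0 ≤ c) (hc1 : c < 1) {U : Set S}
    (hU : MeasurableSet U) (hUc : ∀ x ∉ U, f x ≤ c) :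
    cutNorm μ (fun q => W q - (U ×ˢ U).indicator W q)
      ≤ 2 * cutNorm μ (fun q => W q - f q.1 * f q.2 * W q) / (1 - c) := by
  set ε := cutNorm μ (fun q => W q - f q.1 * f q.2 * W q)
  have h_off {A B : Set S} (hA : MeasurableSet A) (hB : MeasurableSet B) (hAU : A ⊆ Uᶜ) :
      |∫ p in A ×ˢ B, W p ∂(μ.prod μ)| ≤ ε / (1 - c) :=
    abs_setIntegral_prod_le_cutNorm_div hW hf hf01 hc0 hc1 hA hB fun x hx => hUc x (hAU hx)
  refine cutNorm_le (div_nonneg (mul_nonneg zero_le_two (cutNorm_nonneg _)) (by linarith))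
    fun T V hT hV => ?_
  have h_split : ∫ p in T ×ˢ V, (W p - (U ×ˢ U).indicator W p) ∂(μ.prod μ)
      = ∫ p in (T \ U) ×ˢ V, W p ∂(μ.prod μ) + ∫ p in (T ∩ U) ×ˢ (V \ U), W p ∂(μ.prod μ) := by
    rw [← integral_indicator (hT.prod hV), ← integral_indicator ((hT.diff hU).prod hV),
      ← integral_indicator ((hT.inter hU).prod (hV.diff hU)),
      ← integral_add (hW.indicator ((hT.diff hU).prod hV))
        (hW.indicator ((hT.inter hU).prod (hV.diff hU)))]
    congr 1 with ⟨x, y⟩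
    by_cases hx : x ∈ T <;> by_cases hy : y ∈ V <;> by_cases hxU : x ∈ U <;>
      by_cases hyU : y ∈ U <;> simp [hx, hy, hxU, hyU]
  rw [h_split, setIntegral_prod_comm_of_symm hsymm (T ∩ U)]
  calc _ ≤ |∫ p in (T \ U) ×ˢ V, W p ∂(μ.prod μ)|
        + |∫ p in (V \ U) ×ˢ (T ∩ U), W p ∂(μ.prod μ)| := abs_add_le _ _
    _ ≤ ε / (1 - c) + ε / (1 - c) :=
        add_le_add (h_off (hT.diff hU) hV (sdiff_subset_compl _ _))
          (h_off (hV.diff hU) (hT.inter hU) (sdiff_subset_compl _ _))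
    _ = 2 * ε / (1 - c) := by ring

end CutNorm

theorem cut_regular_tail_of_f_general {S : Type*} [MeasurableSpace S]
    (μ : Measure S) [SigmaFinite μ]
    (W : S × S → ℝ) (hW : Integrable W (μ.prod μ))
    (hsymm : ∀ x y, W (x, y) = W (y, x))
    (f : S → ℝ) (hf : Measurable f) (hf01 : ∀ x, f x ∈ Set.Icc (0:ℝ) 1)
    (hfint : Integrable f μ)
    (M ε : ℝ) (hfM : ∫ x, f x ∂μ ≤ M)
    (hcut : cutNorm μ (fun q => W q - f q.1 * f q.2 * W q) < ε) :
    μ {x | 1/2 < f x} ≤ ENNReal.ofReal (2 * M) ∧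
      cutNorm μ (fun q => W q -
        Set.indicator ({x | 1/2 < f x} ×ˢ {x | 1/2 < f x}) W q) < 4 * ε := by
  constructor
  · calc μ {x | 1/2 < f x} ≤ μ {x | 1/2 ≤ f x} :=
          measure_mono (ofPred_subset_ofPred.2 fun _ => le_of_lt)
      _ ≤ ENNReal.ofReal ((∫ x, f x ∂μ) / (1/2)) :=
          measure_ge_le_ofReal_integral_div (.of_forall fun x => (hf01 x).1) hfint one_half_pos
      _ ≤ ENNReal.ofReal (2 * M) := ENNReal.ofReal_le_ofReal (by linarith)
  · calc _ ≤ 2 * cutNorm μ (fun q => W q - f q.1 * f q.2 * W q) / (1 - 1/2) :=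
          cutNorm_sub_indicator_prod_le hW hsymm hf hf01 one_half_pos.le one_half_lt_one
            (measurableSet_lt measurable_const hf) fun _ hx => not_lt.1 hx
      _ = 4 * cutNorm μ (fun q => W q - f q.1 * f q.2 * W q) := by ring
      _ < 4 * ε := by linarith

theorem cut_regular_tail_of_f {S : Type*} [MeasurableSpace S]
    (μ : Measure S) [SigmaFinite μ]
    (W : S × S → ℝ) (hW : Integrable W (μ.prod μ))
    (hsymm : ∀ x y, W (x, y) = W (y, x))
    (f : S → ℝ) (hf : Measurable f) (hf01 : ∀ x, f x ∈ Set.Icc (0:ℝ) 1)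
    (hfint : Integrable f μ)
    (M ε : ℝ) (hε : 0 < ε) (hfM : ∫ x, f x ∂μ ≤ M)
    (hcut : cutNorm μ (fun q => W q - f q.1 * f q.2 * W q) < ε) :
    μ {x | 1/2 < f x} ≤ ENNReal.ofReal (2 * M) ∧
      cutNorm μ (fun q => W q -
        Set.indicator ({x | 1/2 < f x} ×ˢ {x | 1/2 < f x}) W q) < 4 * ε :=
  cut_regular_tail_of_f_general μ W hW hsymm f hf hf01 hfint M ε hfM hcut
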